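/- Let G be a k-chromatic graph (k ≥ 2) with an implicit-identity {u,v}, and let S be an independent set of G with u ∉ S, v ∉ S and χ(G − S) = k − 1. Then {u,v} is an implicit-identity of G − S, i.e., in every proper (k−1)-coloring of G − S, u and v receive the same color. -/

import Mathlib

/-!
A proper `(k - 1)`-coloring of `G - S` extends to a proper `k`-coloring of `G` by giving the
independent set `S` one fresh color. Since `u` and `v` lie outside `S`, they keep their colors,
and these must agree because `{u, v}` is an implicit identity of `G`.
-/

namespace SimpleGraph

variable {V α : Type*} {G : SimpleGraph V} {S : Set V}

open Classical in
noncomputable def Coloring.extendOfIsIndepSet (hS : G.IsIndepSet S)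
    (c : (G.induce Sᶜ).Coloring α) : G.Coloring (Option α) :=
  Coloring.mk (fun x => if hx : x ∈ S then none else some (c ⟨x, hx⟩)) fun {a b} hab => by
    by_cases ha : a ∈ S <;> by_cases hb : b ∈ S
    · exact absurd hab (hS ha hb (G.ne_of_adj hab))
    all_goals simp only [ha, hb, dif_pos, dif_neg, not_false_eq_true, ne_eq, reduceCtorEq,
      Option.some.injEq]
    exact c.valid (comap_adj.mpr hab)

theorem Coloring.extendOfIsIndepSet_apply_of_notMem (hS : G.IsIndepSet S)
    (c : (G.induce Sᶜ).Coloring α) {x : V} (hx : x ∉ S) :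
    c.extendOfIsIndepSet hS x = some (c ⟨x, hx⟩) :=
  dif_neg hx

end SimpleGraph

theorem implicit_identity_invariant_general {V : Type*}
    (G : SimpleGraph V) (k : ℕ) (hk2 : 2 ≤ k)
    (u v : V) (hii : ∀ c : G.Coloring (Fin k), c u = c v)
    (S : Set V) (hS : ∀ a ∈ S, ∀ b ∈ S, ¬ G.Adj a b)
    (hu : u ∉ S) (hv : v ∉ S) :
    ∀ c : (G.induce Sᶜ).Coloring (Fin (k - 1)), c ⟨u, hu⟩ = c ⟨v, hv⟩ := by
  intro c
  obtain ⟨n, rfl⟩ : ∃ n, k = n + 1 := ⟨k - 1, by omega⟩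
  have hSindep : G.IsIndepSet S := fun a ha b hb _ => hS a ha b hb
  let c' := c.extendOfIsIndepSet hSindep
  have hc' : c' u = c' v :=
    (finSuccEquiv n).symm.injective (hii (G.recolorOfEquiv (finSuccEquiv n).symm c'))
  rw [c.extendOfIsIndepSet_apply_of_notMem _ hu,
    c.extendOfIsIndepSet_apply_of_notMem _ hv] at hc'
  exact Option.some_injective _ hc'

/-- If `{u,v}` is an implicit-identity of a `k`-chromatic graph `G`
(`k ≥ 2`) and `S` is a critical independent set avoiding `u` and `v`, then `{u,v}` is
an implicit-identity of `G - S`. -/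
theorem implicit_identity_invariant {V : Type*} [Fintype V]
    (G : SimpleGraph V) (k : ℕ) (hk2 : 2 ≤ k) (hk : G.chromaticNumber = k)
    (u v : V) (hii : ∀ c : G.Coloring (Fin k), c u = c v)
    (S : Set V) (hS : ∀ a ∈ S, ∀ b ∈ S, ¬ G.Adj a b)
    (hu : u ∉ S) (hv : v ∉ S)
    (hcrit : (G.induce Sᶜ).chromaticNumber = ((k - 1 : ℕ) : ℕ∞)) :
    ∀ c : (G.induce Sᶜ).Coloring (Fin (k - 1)), c ⟨u, hu⟩ = c ⟨v, hv⟩ :=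
  implicit_identity_invariant_general G k hk2 u v hii S hS hu hv
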